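/- arXiv:2507.13713 — 6 statements merged into one kernel-verified Lean document; each statement's English description precedes it below -/
import Mathlib

section
/- Let F be a field of characteristic zero, let A = ⊕_{i≥0} A^i be a commutative graded F-algebra, and let D : A → A be an F-linear derivation with D(A^i) ⊆ A^i for all i. Suppose N := D|_{A^2} is nilpotent. Fix an integer i ≥ 1 and assume that (i) w^i ≠ 0 in A^{2i} for every nonzero w ∈ A^2, and (ii) the restriction D|_{A^{2i}} is nilpotent. Then ν(D|_{A^{2i}}) ≥ i·ν(N). -/
/-- The nilpotency index of an endomorphism: the least `m` with `N ^ (m+1) = 0`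
(junk value if `N` is not nilpotent). -/
noncomputable def nuIdx {R M : Type*} [CommSemiring R] [AddCommMonoid M] [Module R M]
    (N : Module.End R M) : ℕ :=
  sInf {m : ℕ | N ^ (m + 1) = 0}

section Aux

variable {F A : Type*} [Field F] [CharZero F] [CommRing A] [Algebra F A]

lemma restrict_pow_val {f : A →ₗ[F] A} {p : Submodule F A} (h : ∀ a ∈ p, f a ∈ p)
    (k : ℕ) (x : p) : (((f.restrict h) ^ k) x : A) = (f ^ k) (x : A) := by
  induction k generalizing x with
  | zero => simp
  | succ k ih =>
    rw [pow_succ, Module.End.mul_apply, pow_succ, Module.End.mul_apply,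
      ih ((f.restrict h) x)]
    rfl

lemma iterLeibniz (D : Derivation F A A) (k : ℕ) (a b : A) :
    ((D : A →ₗ[F] A) ^ k) (a * b)
      = ∑ j ∈ Finset.range (k + 1),
          (k.choose j) • (((D : A →ₗ[F] A) ^ j) a * ((D : A →ₗ[F] A) ^ (k - j)) b) := by
  induction k generalizing a b with
  | zero => simp
  | succ k ih =>
    set Dl : A →ₗ[F] A := (D : A →ₗ[F] A) with hDl
    have h1 : (Dl ^ (k + 1)) (a * b) = (Dl ^ k) (Dl (a * b)) := by
      rw [pow_succ, Module.End.mul_apply]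
    have hD : Dl (a * b) = a * Dl b + Dl a * b := by
      have hcoe : ∀ x, Dl x = D x := fun x => rfl
      rw [hcoe, D.leibniz]
      simp [smul_eq_mul, mul_comm, hcoe]
    rw [h1, hD, map_add, ih, ih]
    have e1 : ∀ j ∈ Finset.range (k + 1),
        (k.choose j) • ((Dl ^ j) a * (Dl ^ (k - j)) (Dl b))
          = (k.choose j) • ((Dl ^ j) a * (Dl ^ (k + 1 - j)) b) := by
      intro j hj
      rw [Finset.mem_range] at hj
      have : (Dl ^ (k - j)) (Dl b) = (Dl ^ (k + 1 - j)) b := by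
        have h5 : k + 1 - j = (k - j) + 1 := by omega
        rw [h5, pow_succ, Module.End.mul_apply]
      rw [this]
    have e2 : ∀ j ∈ Finset.range (k + 1),
        (k.choose j) • ((Dl ^ j) (Dl a) * (Dl ^ (k - j)) b)
          = (k.choose j) • ((Dl ^ (j + 1)) a * (Dl ^ (k + 1 - (j + 1))) b) := by
      intro j hj
      rw [Finset.mem_range] at hj
      have h3 : (Dl ^ j) (Dl a) = (Dl ^ (j + 1)) a := by
        rw [← Module.End.mul_apply, ← pow_succ]
      have h4 : k + 1 - (j + 1) = k - j := by omega
      rw [h3, h4]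
    rw [Finset.sum_congr rfl e1, Finset.sum_congr rfl e2]
    have target : ∑ j ∈ Finset.range (k + 2),
        ((k + 1).choose j) • ((Dl ^ j) a * (Dl ^ (k + 1 - j)) b)
        = (∑ j ∈ Finset.range (k + 1),
            (k.choose j) • ((Dl ^ j) a * (Dl ^ (k + 1 - j)) b))
          + ∑ j ∈ Finset.range (k + 1),
            (k.choose j) • ((Dl ^ (j + 1)) a * (Dl ^ (k + 1 - (j + 1))) b) := by
      rw [Finset.sum_range_succ' (fun j => ((k + 1).choose j) • ((Dl ^ j) a * (Dl ^ (k + 1 - j)) b))]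
      have e3 : ∀ j ∈ Finset.range (k + 1),
          ((k + 1).choose (j + 1)) • ((Dl ^ (j + 1)) a * (Dl ^ (k + 1 - (j + 1))) b)
            = (k.choose (j + 1)) • ((Dl ^ (j + 1)) a * (Dl ^ (k + 1 - (j + 1))) b)
              + (k.choose j) • ((Dl ^ (j + 1)) a * (Dl ^ (k + 1 - (j + 1))) b) := by
        intro j hj
        rw [Nat.choose_succ_succ, add_smul]
        exact add_comm _ _
      rw [Finset.sum_congr rfl e3, Finset.sum_add_distrib]
      have e4 : ∑ j ∈ Finset.range (k + 1),
          (k.choose (j + 1)) • ((Dl ^ (j + 1)) a * (Dl ^ (k + 1 - (j + 1))) b)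
          + ((k + 1).choose 0) • ((Dl ^ 0) a * (Dl ^ (k + 1 - 0)) b)
          = ∑ j ∈ Finset.range (k + 1),
            (k.choose j) • ((Dl ^ j) a * (Dl ^ (k + 1 - j)) b) := by
        rw [Finset.sum_range_succ]
        simp only [Nat.choose_succ_self, zero_smul, add_zero, Nat.choose_zero_right]
        rw [Finset.sum_range_succ' (fun j => (k.choose j) • ((Dl ^ j) a * (Dl ^ (k + 1 - j)) b))]
        simp
      linear_combination e4
    rw [target]

lemma keyLemma (D : Derivation F A A) (ν : ℕ) (w : A)
    (hw : ∀ j, ν < j → ((D : A →ₗ[F] A) ^ j) w = 0) (m : ℕ) :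
    (∀ k, m * ν < k → ((D : A →ₗ[F] A) ^ k) (w ^ m) = 0) ∧
    ∃ c : ℕ, 0 < c ∧
      ((D : A →ₗ[F] A) ^ (m * ν)) (w ^ m) = c • ((((D : A →ₗ[F] A) ^ ν) w) ^ m) := by
  set Dl : A →ₗ[F] A := (D : A →ₗ[F] A) with hDl
  induction m with
  | zero =>
    constructor
    · intro k hk
      obtain ⟨k', rfl⟩ : ∃ k', k = k' + 1 := ⟨k - 1, by omega⟩
      rw [pow_zero, pow_succ, Module.End.mul_apply]
      have h1 : Dl (1 : A) = 0 := D.map_one_eq_zero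
      rw [h1, map_zero]
    · exact ⟨1, one_pos, by simp⟩
  | succ m ih =>
    obtain ⟨ih1, c, hc, ih2⟩ := ih
    have hsplit : (m + 1) * ν = m * ν + ν := by ring
    have hwpow : ∀ k, (m + 1) * ν < k → (Dl ^ k) (w ^ (m + 1)) = 0 := by
      intro k hk
      rw [pow_succ', iterLeibniz]
      apply Finset.sum_eq_zero
      intro j hj
      rw [Finset.mem_range] at hj
      by_cases hjν : ν < j
      · rw [hw j hjν, zero_mul, smul_zero]
      · have : m * ν < k - j := by omega
        rw [ih1 _ this, mul_zero, smul_zero]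
    refine ⟨hwpow, ?_⟩
    refine ⟨((m + 1) * ν).choose ν * c, ?_, ?_⟩
    · exact Nat.mul_pos (Nat.choose_pos (by nlinarith)) hc
    · rw [pow_succ' w m, iterLeibniz]
      rw [Finset.sum_eq_single ν]
      · have h6 : (m + 1) * ν - ν = m * ν := by omega
        rw [h6, ih2, mul_smul_comm, smul_smul, ← pow_succ']
      · intro j hj hjne
        rw [Finset.mem_range] at hj
        rcases lt_or_gt_of_ne hjne with hlt | hgt
        · have : m * ν < (m + 1) * ν - j := by omega
          rw [ih1 _ this, mul_zero, smul_zero]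
        · rw [hw j hgt, zero_mul, smul_zero]
      · intro hν
        exact absurd (Finset.mem_range.mpr (by omega)) hν

end Aux

/-- For a commutative graded algebra `A = ⊕ A^j` over a field of
characteristic zero, a degree-preserving derivation `D` whose restriction `N` to `A^2`
is nilpotent, and `i ≥ 1` such that `w^i ≠ 0` for all nonzero `w ∈ A^2` and `D|_{A^{2i}}`
is nilpotent, one has `ν(D|_{A^{2i}}) ≥ i · ν(N)`. -/
theorem stmt1 {F A : Type*} [Field F] [CharZero F] [CommRing A] [Algebra F A]
    (𝒜 : ℕ → Submodule F A) [GradedAlgebra 𝒜]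
    (D : Derivation F A A)
    (hpres : ∀ (j : ℕ), ∀ a ∈ 𝒜 j, (D : A →ₗ[F] A) a ∈ 𝒜 j)
    (hN : IsNilpotent ((D : A →ₗ[F] A).restrict (hpres 2)))
    (i : ℕ) (hi : 1 ≤ i)
    (hpow : ∀ w ∈ 𝒜 2, w ≠ 0 → w ^ i ≠ 0)
    (hD2i : IsNilpotent ((D : A →ₗ[F] A).restrict (hpres (2 * i)))) :
    i * nuIdx ((D : A →ₗ[F] A).restrict (hpres 2)) ≤
      nuIdx ((D : A →ₗ[F] A).restrict (hpres (2 * i))) := by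
  classical
  set Dl : A →ₗ[F] A := (D : A →ₗ[F] A) with hDl
  set N := Dl.restrict (hpres 2) with hNdef
  set M := Dl.restrict (hpres (2 * i)) with hMdef
  set ν := nuIdx N with hν
  have hνdef : ν = sInf {m : ℕ | N ^ (m + 1) = 0} := rfl
  rcases Nat.eq_zero_or_pos ν with h0 | hνpos
  · rw [h0, mul_zero]; exact Nat.zero_le _
  have hSne : {m : ℕ | N ^ (m + 1) = 0}.Nonempty := by
    obtain ⟨k, hk⟩ := hN
    exact ⟨k, by simp only [Set.mem_setOf_eq, pow_succ, hk, zero_mul]⟩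
  have hNν1 : N ^ (ν + 1) = 0 := by
    have := Nat.sInf_mem hSne
    rwa [← hνdef] at this
  have hNν : N ^ ν ≠ 0 := by
    have hlt : ν - 1 < sInf {m : ℕ | N ^ (m + 1) = 0} := by omega
    have h2 := Nat.notMem_of_lt_sInf hlt
    simp only [Set.mem_setOf_eq] at h2
    have h3 : ν - 1 + 1 = ν := by omega
    rwa [h3] at h2
  obtain ⟨x, hx⟩ : ∃ x : 𝒜 2, (N ^ ν) x ≠ 0 := by
    by_contra h
    push_neg at h
    exact hNν (LinearMap.ext fun x => h x)
  set w : A := (x : A) with hwdef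
  have hw2 : w ∈ 𝒜 2 := x.2
  have hval : ∀ k : ℕ, ((N ^ k) x : A) = (Dl ^ k) w := fun k => restrict_pow_val _ k x
  have hDνw : (Dl ^ ν) w ≠ 0 := by
    rw [← hval]
    exact fun h => hx (Subtype.ext h)
  have hDνw2 : (Dl ^ ν) w ∈ 𝒜 2 := by rw [← hval]; exact ((N ^ ν) x).2
  have hwhigh : ∀ j, ν < j → (Dl ^ j) w = 0 := by
    intro j hj
    have h1 : (Dl ^ (ν + 1)) w = 0 := by
      rw [← hval (ν + 1), hNν1]
      simp
    obtain ⟨d, rfl⟩ : ∃ d, j = d + (ν + 1) := ⟨j - (ν + 1), by omega⟩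
    rw [pow_add, Module.End.mul_apply, h1, map_zero]
  obtain ⟨-, c, hcpos, hc⟩ := keyLemma D ν w hwhigh i
  have hbase : ((Dl ^ ν) w) ^ i ≠ 0 := hpow _ hDνw2 hDνw
  have hiν : (Dl ^ (i * ν)) (w ^ i) ≠ 0 := by
    rw [hc]
    intro h
    apply hbase
    have h2 : (c : F) • (((Dl ^ ν) w) ^ i) = 0 := by
      rw [Nat.cast_smul_eq_nsmul]; exact h
    have h3 : (c : F) ≠ 0 := Nat.cast_ne_zero.mpr hcpos.ne'
    have h4 : (c : F)⁻¹ • ((c : F) • (((Dl ^ ν) w) ^ i)) = 0 := by rw [h2, smul_zero]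
    rwa [smul_smul, inv_mul_cancel₀ h3, one_smul] at h4
  have hwi : w ^ i ∈ 𝒜 (2 * i) := by
    have := SetLike.pow_mem_graded i hw2
    rwa [smul_eq_mul, mul_comm] at this
  set y : 𝒜 (2 * i) := ⟨w ^ i, hwi⟩ with hy
  have hMy : ((M ^ (i * ν)) y : A) = (Dl ^ (i * ν)) (w ^ i) := restrict_pow_val _ _ y
  have hMne : M ^ (i * ν) ≠ 0 := by
    intro h
    apply hiν
    rw [← hMy, h]
    simp
  have hSne2 : {m : ℕ | M ^ (m + 1) = 0}.Nonempty := by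
    obtain ⟨k, hk⟩ := hD2i
    exact ⟨k, by simp only [Set.mem_setOf_eq, pow_succ, hk, zero_mul]⟩
  have hμ : M ^ (nuIdx M + 1) = 0 := Nat.sInf_mem hSne2
  by_contra hcon
  push_neg at hcon
  apply hMne
  obtain ⟨d, hd⟩ : ∃ d, i * ν = d + (nuIdx M + 1) := ⟨i * ν - (nuIdx M + 1), by omega⟩
  rw [hd, pow_add, hμ, mul_zero]
end

section
/- Let F be a field of characteristic zero, let V and W be nonzero finite-dimensional F-vector spaces, and let N ∈ End_F(V) and M ∈ End_F(W) be nilpotent. Then the endomorphism N ⊗ id_W + id_V ⊗ M of V ⊗_F W is nilpotent, and its nilpotency index equals ν(N) + ν(M). -/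
open scoped TensorProduct

lemma tmul_ne_zero_of_ne_zero {F V W : Type*} [Field F]
    [AddCommGroup V] [Module F V] [AddCommGroup W] [Module F W]
    {v : V} {w : W} (hv : v ≠ 0) (hw : w ≠ 0) : v ⊗ₜ[F] w ≠ (0 : V ⊗[F] W) := by
  obtain ⟨f, hf⟩ : ∃ f : Module.Dual F V, f v ≠ 0 := by
    by_contra h
    push_neg at h
    exact hv ((Module.forall_dual_apply_eq_zero_iff F v).mp h)
  obtain ⟨g, hg⟩ : ∃ g : Module.Dual F W, g w ≠ 0 := by
    by_contra h
    push_neg at h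
    exact hw ((Module.forall_dual_apply_eq_zero_iff F w).mp h)
  intro h
  have : (TensorProduct.lid F F).toLinearMap.comp (TensorProduct.map f g) (v ⊗ₜ[F] w) = 0 := by
    rw [h]; simp
  simp only [LinearMap.comp_apply, TensorProduct.map_tmul, LinearEquiv.coe_coe,
    TensorProduct.lid_tmul, smul_eq_mul] at this
  exact mul_ne_zero hf hg this

lemma nuIdx_pow_succ {R M : Type*} [CommSemiring R] [AddCommMonoid M] [Module R M]
    [Nontrivial M] {N : Module.End R M} (hN : IsNilpotent N) : N ^ (nuIdx N + 1) = 0 := by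
  obtain ⟨n, hn⟩ := hN
  have hn0 : n ≠ 0 := by
    rintro rfl
    simp only [pow_zero] at hn
    exact one_ne_zero hn
  have hmem : (n - 1) ∈ {m : ℕ | N ^ (m + 1) = 0} := by
    simp only [Set.mem_setOf_eq, Nat.sub_add_cancel (Nat.one_le_iff_ne_zero.mpr hn0)]
    exact hn
  exact Nat.sInf_mem ⟨_, hmem⟩

lemma nuIdx_pow_ne_zero {R M : Type*} [CommSemiring R] [AddCommMonoid M] [Module R M]
    [Nontrivial M] (N : Module.End R M) : N ^ nuIdx N ≠ 0 := by
  cases h : nuIdx N with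
  | zero => simp only [pow_zero]; exact one_ne_zero
  | succ k =>
    intro hk
    have hmem : k ∈ {m : ℕ | N ^ (m + 1) = 0} := hk
    have h2 : nuIdx N ≤ k := Nat.sInf_le hmem
    omega

/-- For nilpotent endomorphisms `N` of `V` and `M` of `W` (both nonzero
finite-dimensional vector spaces over a field of characteristic zero), the operator
`N ⊗ id + id ⊗ M` on `V ⊗ W` is nilpotent of nilpotency index `ν(N) + ν(M)`. -/
theorem stmt3 {F V W : Type*} [Field F] [CharZero F]
    [AddCommGroup V] [Module F V] [FiniteDimensional F V] [Nontrivial V]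
    [AddCommGroup W] [Module F W] [FiniteDimensional F W] [Nontrivial W]
    (N : Module.End F V) (M : Module.End F W)
    (hN : IsNilpotent N) (hM : IsNilpotent M) :
    IsNilpotent (LinearMap.rTensor W N + LinearMap.lTensor V M) ∧
      nuIdx (LinearMap.rTensor W N + LinearMap.lTensor V M) = nuIdx N + nuIdx M := by
  set a := nuIdx N with ha
  set b := nuIdx M with hb
  set A := LinearMap.rTensor W N with hA
  set B := LinearMap.lTensor V M with hB
  have hcomm : Commute A B := by
    show _ = _
    rw [hA, hB, Module.End.mul_eq_comp, Module.End.mul_eq_comp, LinearMap.rTensor_comp_lTensor,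
      LinearMap.lTensor_comp_rTensor]
  have hNa : N ^ (a + 1) = 0 := nuIdx_pow_succ hN
  have hMb : M ^ (b + 1) = 0 := nuIdx_pow_succ hM
  have hNane : N ^ a ≠ 0 := nuIdx_pow_ne_zero N
  have hMbne : M ^ b ≠ 0 := nuIdx_pow_ne_zero M
  have hApow : ∀ k, A ^ k = LinearMap.rTensor W (N ^ k) := fun k => LinearMap.rTensor_pow N k
  have hBpow : ∀ k, B ^ k = LinearMap.lTensor V (M ^ k) := fun k => LinearMap.lTensor_pow M k
  -- vanishing of the (a+b+1)-st power
  have hvanish : (A + B) ^ (a + b + 1) = 0 := by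
    rw [hcomm.add_pow]
    apply Finset.sum_eq_zero
    intro k hk
    simp only [Finset.mem_range] at hk
    rcases le_or_gt (a + 1) k with h | h
    · have hAk : A ^ k = 0 := by
        rw [hApow, show k = (a + 1) + (k - (a + 1)) by omega, pow_add, hNa, zero_mul,
          LinearMap.rTensor_zero]
      rw [hAk, zero_mul, zero_mul]
    · have hBk : B ^ (a + b + 1 - k) = 0 := by
        rw [hBpow, show a + b + 1 - k = (b + 1) + (a + b + 1 - k - (b + 1)) by omega, pow_add,
          hMb, zero_mul, LinearMap.lTensor_zero]
      rw [hBk, mul_zero, zero_mul]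
  refine ⟨⟨a + b + 1, hvanish⟩, ?_⟩
  -- nonvanishing of the (a+b)-th power
  obtain ⟨v, hv⟩ : ∃ v : V, (N ^ a) v ≠ 0 := by
    by_contra h
    push_neg at h
    exact hNane (LinearMap.ext h)
  obtain ⟨w, hw⟩ : ∃ w : W, (M ^ b) w ≠ 0 := by
    by_contra h
    push_neg at h
    exact hMbne (LinearMap.ext h)
  have happ : ∀ k l c : ℕ,
      (A ^ k * B ^ l * (c : Module.End F (V ⊗[F] W))) (v ⊗ₜ[F] w)
        = c • (((N ^ k) v) ⊗ₜ[F] ((M ^ l) w)) := by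
    intro k l c
    rw [hApow, hBpow]
    simp [Module.End.mul_apply, Module.End.natCast_apply, TensorProduct.smul_tmul']
  have hne : (A + B) ^ (a + b) ≠ 0 := by
    intro hzero
    have h1 : ((A + B) ^ (a + b)) (v ⊗ₜ[F] w) = 0 := by rw [hzero]; rfl
    rw [hcomm.add_pow] at h1
    simp only [LinearMap.coe_sum, Finset.sum_apply] at h1
    rw [Finset.sum_eq_single a (by
      intro k hk hka
      simp only [Finset.mem_range] at hk
      rw [happ]
      rcases lt_or_gt_of_ne hka with h | h
      · have hMl : M ^ (a + b - k) = 0 := by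
          rw [show a + b - k = (b + 1) + (a + b - k - (b + 1)) by omega, pow_add, hMb, zero_mul]
        rw [hMl]
        simp
      · have hNk : N ^ k = 0 := by
          rw [show k = (a + 1) + (k - (a + 1)) by omega, pow_add, hNa, zero_mul]
        rw [hNk]
        simp) (by intro h; simp only [Finset.mem_range] at h; omega)] at h1
    rw [happ] at h1
    simp only [Nat.add_sub_cancel_left] at h1
    have hc : (a + b).choose a ≠ 0 := (Nat.choose_pos (Nat.le_add_right a b)).ne'
    have htm := tmul_ne_zero_of_ne_zero (F := F) hv hw
    rw [← Nat.cast_smul_eq_nsmul F] at h1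
    rcases smul_eq_zero.mp h1 with h1 | h1
    · exact hc (Nat.cast_eq_zero.mp h1)
    · exact htm h1
  -- the infimum computation
  have hmem : (a + b) ∈ {m : ℕ | (A + B) ^ (m + 1) = 0} := hvanish
  have hdef : nuIdx (A + B) = sInf {m : ℕ | (A + B) ^ (m + 1) = 0} := rfl
  rw [hdef]
  refine le_antisymm (Nat.sInf_le hmem) ?_
  by_contra h
  push_neg at h
  have hinf : sInf {m : ℕ | (A + B) ^ (m + 1) = 0} ∈ {m : ℕ | (A + B) ^ (m + 1) = 0} :=
    Nat.sInf_mem ⟨_, hmem⟩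
  set m := sInf {m : ℕ | (A + B) ^ (m + 1) = 0} with hmdef
  have hz : (A + B) ^ (a + b) = 0 := by
    rw [show a + b = (m + 1) + (a + b - (m + 1)) by omega, pow_add, hinf, zero_mul]
  exact hne hz
end

section
/- Let F be an algebraically closed field of characteristic zero and (V, q) a non-degenerate quadratic F-space of even dimension ≥ 4. Let H be a nonzero finite-dimensional F-vector space, θ : Cl(q) → End_F(H) an isomorphism of F-algebras, N ∈ End_F(V) with N^3 = 0, and M ∈ End_F(H) with M^2 = 0, such that θ(ι(N v)) = M ∘ θ(ι v) − θ(ι v) ∘ M for all v ∈ V. Then exactly one of the following holds: (a) N = 0 and M = 0; (b) N ≠ 0, N^2 = 0, rank N = 2, and 4·rank M = dim_F H; (c) N^2 ≠ 0, rank N = 2, rank N^2 = 1, and 2·rank M = dim_F H. -/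
/-!
Put `φ v = θ (ι v)`, so that `φ (N v) = M φ(v) - φ(v) M`. Since `M² = 0` this gives
`φ (N² v) = -2 M φ(v) M`: products `φ(x) φ(y)` with `x, y ∈ range N²` vanish, so `range N²`
is totally isotropic, and `φ(u) M = 0` for `u ∈ ker N ⊓ range N`, which is then totally
isotropic too because `M ≠ 0`.

All dimension counts come from one fact about Clifford modules: for a totally isotropic
subspace `W`, the common kernel of the `φ w`, `w ∈ W`, has dimension `dim H / 2 ^ dim W`. It is
proved one isotropic vector `e` at a time, using a partner `f` with `φ e φ f + φ f φ e = 1`, for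
which `ker φ e = range φ e` on every subspace stable under both. Comparing these common kernels
with `range M`, and the ranks of `φ (N v)` and `φ (N² v)` with `rank M`, fixes every rank.

The case `M = 0` forces `N = 0` since `φ` is injective; `N = 0` forces `M = 0` since `M` is then
central in `End H`; and `rank N ≠ 1` because `polar Q (N v) v = 0`.
-/

open Module LinearMap QuadraticMap

theorem le_of_two_pow_mul_le_two_pow_mul {r k m : ℕ} (hm : 0 < m) (h : 2 ^ r * m ≤ 2 ^ k * m) :
    r ≤ k :=
  (Nat.pow_le_pow_iff_right one_lt_two).mp (Nat.le_of_mul_le_mul_right h hm)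

section EndomorphismRank

variable {F H : Type*} [Field F] [AddCommGroup H] [Module F H]

theorem ker_eq_range_of_mul_self_eq_zero {a b : Module.End F H} (ha : a * a = 0)
    (hab : a * b + b * a = 1) : ker a = range a := by
  refine le_antisymm (fun x hx => ⟨b x, ?_⟩) (range_le_ker_iff.mpr ha)
  simpa [mem_ker.mp hx] using LinearMap.congr_fun hab x

variable [FiniteDimensional F H]

theorem two_mul_finrank_inf_ker {K : Submodule F H} {a b : Module.End F H}
    (haK : ∀ x ∈ K, a x ∈ K) (hbK : ∀ x ∈ K, b x ∈ K) (ha : a * a = 0)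
    (hab : a * b + b * a = 1) : 2 * finrank F ↥(K ⊓ ker a) = finrank F K := by
  have hker : ker (a.restrict haK) = range (a.restrict haK) :=
    ker_eq_range_of_mul_self_eq_zero (b := b.restrict hbK)
      (by ext x; simpa using LinearMap.congr_fun ha x)
      (by ext x; simpa using LinearMap.congr_fun hab x)
  have hfin : finrank F ↥(ker (a.restrict haK)) = finrank F ↥(K ⊓ ker a) := by
    rw [← Submodule.finrank_map_subtype_eq, ker_restrict, Submodule.map_comap_subtype]
  have := finrank_range_add_finrank_ker (a.restrict haK)
  rw [← hker] at this
  omega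

theorem finrank_range_mul_le_left (A B : Module.End F H) :
    finrank F (range (A * B)) ≤ finrank F (range A) :=
  Submodule.finrank_mono (range_comp_le_range B A)

theorem finrank_range_mul_le_right (A B : Module.End F H) :
    finrank F (range (A * B)) ≤ finrank F (range B) := by
  rw [Module.End.mul_eq_comp, range_comp]
  exact Submodule.finrank_map_le A (range B)

theorem finrank_range_sub_le (A B : Module.End F H) :
    finrank F (range (A - B)) ≤ finrank F (range A) + finrank F (range B) := by
  rw [sub_eq_add_neg]
  calc finrank F (range (A + -B)) ≤ finrank F ↥(range A ⊔ range (-B)) :=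
        Submodule.finrank_mono (range_add_le A (-B))
    _ ≤ _ := by
        rw [range_neg]
        exact Submodule.finrank_add_le_finrank_add_finrank _ _

theorem finrank_range_ne_zero {f : Module.End F H} (hf : f ≠ 0) : finrank F (range f) ≠ 0 :=
  fun h => hf (range_eq_bot.mp (Submodule.finrank_eq_zero.mp h))

theorem finrank_ker_inf_range_add_finrank_range_sq (f : Module.End F H) :
    finrank F ↥(ker f ⊓ range f) + finrank F (range (f ^ 2)) = finrank F (range f) := by
  have h := finrank_range_add_finrank_ker (f.domRestrict (range f))
  rw [range_domRestrict, ← range_comp, ← Module.End.mul_eq_comp, ← _root_.sq, ker_domRestrict,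
    ← Submodule.finrank_map_subtype_eq, Submodule.map_comap_subtype, inf_comm] at h
  omega

end EndomorphismRank

section NondegenerateForm

variable {F V : Type*} [Field F] [AddCommGroup V] [Module F V]

theorem exists_dual_family [FiniteDimensional F V] {B : LinearMap.BilinForm F V}
    (hB : B.Nondegenerate) {κ : Type*} [DecidableEq κ] {e : κ → V}
    (he : LinearIndependent F e) :
    ∃ f : κ → V, ∀ i j, B (f i) (e j) = if i = j then 1 else 0 := by
  let b := Basis.span he
  choose g hg using fun i => exists_extend (b.coord i)
  refine ⟨fun i => (B.toDual hB).symm (g i), fun i j => ?_⟩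
  have := LinearMap.congr_fun (hg i) (b j)
  simp only [coe_comp, Function.comp_apply, Submodule.subtype_apply, b, Basis.span_apply] at this
  simp [BilinForm.apply_toDual_symm_apply, this, Finsupp.single_apply, eq_comm]

theorem finrank_range_ne_one_of_apply_self_eq_zero {B : LinearMap.BilinForm F V}
    (hB : B.Nondegenerate) {N : Module.End F V} (hN : ∀ v, B (N v) v = 0) :
    finrank F (range N) ≠ 1 := by
  intro h1
  obtain ⟨⟨_, v₁, rfl⟩, hu, hspan⟩ := finrank_eq_one_iff'.mp h1
  obtain ⟨w, hw⟩ : ∃ w, B (N v₁) w ≠ 0 := by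
    by_contra! h
    exact hu (Subtype.ext (hB.1 _ h))
  obtain ⟨c, hc⟩ := hspan ⟨N w, w, rfl⟩
  have hNw : N w = c • N v₁ := (congrArg Subtype.val hc).symm
  have hc0 : c = 0 := by
    simpa [hNw, hw] using hN w
  have := hN (v₁ + w)
  simp [hNw, hc0, hN v₁, hw] at this

end NondegenerateForm

section CliffordModule

variable {F V H : Type*} [Field F] [AddCommGroup V] [Module F V] [AddCommGroup H] [Module F H]
  {Q : QuadraticForm F V} {φ : V →ₗ[F] Module.End F H}

theorem mul_add_mul_swap_eq_polar (hφ : ∀ v, φ v * φ v = algebraMap F _ (Q v)) (v w : V) :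
    φ v * φ w + φ w * φ v = algebraMap F _ (polar Q v w) := by
  simpa using
    congrArg (CliffordAlgebra.lift Q ⟨φ, hφ⟩) (CliffordAlgebra.ι_mul_ι_add_swap v w)

theorem apply_mem_ker_of_polar_eq_zero (hφ : ∀ v, φ v * φ v = algebraMap F _ (Q v)) {v w : V}
    (hvw : polar Q v w = 0) {x : H} (hx : x ∈ ker (φ v)) : φ w x ∈ ker (φ v) := by
  simpa [mem_ker.mp hx, hvw] using LinearMap.congr_fun (mul_add_mul_swap_eq_polar hφ v w) x

theorem injective_of_nondegenerate [Nontrivial H] (hφ : ∀ v, φ v * φ v = algebraMap F _ (Q v))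
    (hQ : (polarBilin Q).Nondegenerate) : Function.Injective φ := by
  refine (injective_iff_map_eq_zero φ).mpr fun u hu => hQ.1 u fun w => ?_
  simpa [hu] using (mul_add_mul_swap_eq_polar hφ u w).symm

theorem eq_zero_of_forall_commute [Nontrivial H] (θ : CliffordAlgebra Q ≃ₐ[F] Module.End F H)
    {M : Module.End F H} (hM : M * M = 0)
    (hcomm : ∀ v, Commute M (θ (CliffordAlgebra.ι Q v))) : M = 0 := by
  have hcentral : M ∈ Subalgebra.center F (Module.End F H) := by
    refine Subalgebra.mem_center_iff.mpr fun b => ?_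
    have h := Algebra.commute_of_mem_adjoin_of_forall_mem_commute (a := θ.symm M) (b := θ.symm b)
      (by rw [CliffordAlgebra.adjoin_range_ι]; trivial)
      (by rintro _ ⟨v, rfl⟩; simpa using (hcomm v).map θ.symm.toAlgHom)
    simpa using (h.map θ.toAlgHom).eq.symm
  rw [Algebra.IsCentral.center_eq_bot, Algebra.mem_bot] at hcentral
  obtain ⟨c, rfl⟩ := hcentral
  rw [← map_mul, map_eq_zero, mul_self_eq_zero] at hM
  rw [hM, map_zero]

variable [FiniteDimensional F H]

theorem two_mul_finrank_range (hφ : ∀ v, φ v * φ v = algebraMap F _ (Q v))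
    (hQ : (polarBilin Q).Nondegenerate) {e : V} (he : Q e = 0) (he0 : e ≠ 0) :
    2 * finrank F (range (φ e)) = finrank F H := by
  obtain ⟨w, hw⟩ : ∃ w, polar Q e w ≠ 0 := by
    by_contra! h
    exact he0 (hQ.1 e h)
  have hker : ker (φ e) = range (φ e) :=
    ker_eq_range_of_mul_self_eq_zero (b := φ ((polar Q e w)⁻¹ • w)) (by simp [hφ, he])
      (by rw [mul_add_mul_swap_eq_polar hφ, polar_smul_right, smul_eq_mul, inv_mul_cancel₀ hw,
        map_one])
  have := finrank_range_add_finrank_ker (φ e)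
  rw [hker] at this
  omega

theorem two_pow_card_mul_finrank_iInf_ker (hφ : ∀ v, φ v * φ v = algebraMap F _ (Q v))
    {κ : Type*} [DecidableEq κ] {e f : κ → V} (he : ∀ i, Q (e i) = 0)
    (hee : ∀ i j, polar Q (e i) (e j) = 0)
    (hfe : ∀ i j, polar Q (f i) (e j) = if i = j then 1 else 0) (s : Finset κ) :
    2 ^ s.card * finrank F ↥(⨅ i ∈ s, ker (φ (e i))) = finrank F H := by
  induction s using Finset.induction_on with
  | empty =>
    have : (⨅ i ∈ (∅ : Finset κ), ker (φ (e i))) = ⊤ := by simp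
    rw [this, finrank_top, Finset.card_empty, pow_zero, one_mul]
  | insert a s ha ih =>
    have hstab : ∀ w, (∀ i ∈ s, polar Q (e i) w = 0) →
        ∀ x ∈ ⨅ i ∈ s, ker (φ (e i)), φ w x ∈ ⨅ i ∈ s, ker (φ (e i)) := by
      intro w hw x hx
      simp only [Submodule.mem_iInf] at hx ⊢
      exact fun i hi => apply_mem_ker_of_polar_eq_zero hφ (hw i hi) (hx i hi)
    have hhalf := two_mul_finrank_inf_ker (hstab _ fun i _ => hee i a)
      (hstab _ fun i hi => by rw [polar_comm, hfe, if_neg (by rintro rfl; exact ha hi)])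
      (by rw [hφ, he, map_zero])
      (by rw [mul_add_mul_swap_eq_polar hφ, polar_comm, hfe, if_pos rfl, map_one])
    rw [Finset.iInf_insert, Finset.card_insert_of_notMem ha, pow_succ, inf_comm, mul_assoc, hhalf,
      ih]

theorem two_pow_finrank_mul_finrank_le [FiniteDimensional F V]
    (hφ : ∀ v, φ v * φ v = algebraMap F _ (Q v)) (hQ : (polarBilin Q).Nondegenerate)
    {W : Submodule F V} (hW : ∀ w ∈ W, Q w = 0) {K : Submodule F H}
    (hK : ∀ w ∈ W, K ≤ ker (φ w)) : 2 ^ finrank F W * finrank F K ≤ finrank F H := by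
  classical
  let b := Module.finBasis F W
  obtain ⟨f, hf⟩ := exists_dual_family hQ (b.linearIndependent.map' W.subtype W.ker_subtype)
  have hpolar : ∀ x ∈ W, ∀ y ∈ W, polar Q x y = 0 := fun x hx y hy => by
    simp [QuadraticMap.polar, hW x hx, hW y hy, hW _ (W.add_mem hx hy)]
  have hcount := two_pow_card_mul_finrank_iInf_ker hφ (e := fun i => (b i : V))
    (fun i => hW _ (b i).2) (fun i j => hpolar _ (b i).2 _ (b j).2) hf Finset.univ
  rw [Finset.card_univ, Fintype.card_fin] at hcount
  rw [← hcount]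
  gcongr
  exact Submodule.finrank_mono (le_iInf₂ fun i _ => hK _ (b i).2)

end CliffordModule

section CompatiblePair

variable {F V H : Type*} [Field F] [AddCommGroup V] [Module F V] [AddCommGroup H] [Module F H]
  {Q : QuadraticForm F V} {φ : V →ₗ[F] Module.End F H} {N : Module.End F V}
  {M : Module.End F H}

theorem polar_apply_self_eq_zero [Nontrivial H] (hφ : ∀ v, φ v * φ v = algebraMap F _ (Q v))
    (hNM : ∀ v, φ (N v) = M * φ v - φ v * M) (v : V) : QuadraticMap.polar Q (N v) v = 0 := by
  rw [← map_eq_zero (algebraMap F (Module.End F H)), ← mul_add_mul_swap_eq_polar hφ, hNM]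
  calc (M * φ v - φ v * M) * φ v + φ v * (M * φ v - φ v * M)
      = M * (φ v * φ v) - φ v * φ v * M := by noncomm_ring
    _ = 0 := by rw [hφ, Algebra.commutes, sub_self]

theorem mul_apply_eq_neg (hNM : ∀ v, φ (N v) = M * φ v - φ v * M) (hM : M * M = 0) (v : V) :
    M * φ (N v) = -(M * φ v * M) := by
  rw [hNM, mul_sub, ← mul_assoc, hM, zero_mul, zero_sub, mul_assoc]

theorem apply_mul_eq (hNM : ∀ v, φ (N v) = M * φ v - φ v * M) (hM : M * M = 0) (v : V) :
    φ (N v) * M = M * φ v * M := by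
  rw [hNM, sub_mul, mul_assoc (φ v), hM, mul_zero, sub_zero]

theorem apply_apply_eq (hNM : ∀ v, φ (N v) = M * φ v - φ v * M) (hM : M * M = 0) (v : V) :
    φ (N (N v)) = (-2 : F) • (M * φ v * M) := by
  rw [hNM, mul_apply_eq_neg hNM hM, apply_mul_eq hNM hM]
  module

theorem apply_mul_eq_zero_of_mem_ker_inf_range [CharZero F]
    (hNM : ∀ v, φ (N v) = M * φ v - φ v * M) (hM : M * M = 0) {u : V}
    (hu : u ∈ ker N ⊓ range N) : φ u * M = 0 := by
  obtain ⟨hNu, v, rfl⟩ := hu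
  have := apply_apply_eq hNM hM v
  rw [mem_ker.mp hNu, map_zero, eq_comm, smul_eq_zero] at this
  rw [apply_mul_eq hNM hM]
  exact this.resolve_left (by norm_num)

theorem quadratic_eq_zero_of_mem_ker_inf_range [CharZero F]
    (hφ : ∀ v, φ v * φ v = algebraMap F _ (Q v)) (hNM : ∀ v, φ (N v) = M * φ v - φ v * M)
    (hM : M * M = 0) (hM0 : M ≠ 0) {u : V} (hu : u ∈ ker N ⊓ range N) : Q u = 0 := by
  have : Q u • M = 0 := by
    rw [Algebra.smul_def, ← hφ, mul_assoc, apply_mul_eq_zero_of_mem_ker_inf_range hNM hM hu,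
      mul_zero]
  exact (smul_eq_zero.mp this).resolve_right hM0

theorem apply_mul_apply_eq_zero_of_mem_range_sq (hNM : ∀ v, φ (N v) = M * φ v - φ v * M)
    (hM : M * M = 0) {x y : V} (hx : x ∈ range (N ^ 2)) (hy : y ∈ range (N ^ 2)) :
    φ x * φ y = 0 := by
  obtain ⟨v, rfl⟩ := hx
  obtain ⟨w, rfl⟩ := hy
  rw [_root_.sq, Module.End.mul_apply, Module.End.mul_apply, apply_apply_eq hNM hM,
    apply_apply_eq hNM hM, smul_mul_smul,
    show M * φ v * M * (M * φ w * M) = M * φ v * (M * M) * φ w * M by noncomm_ring, hM]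
  simp

theorem quadratic_eq_zero_of_mem_range_sq [Nontrivial H]
    (hφ : ∀ v, φ v * φ v = algebraMap F _ (Q v)) (hNM : ∀ v, φ (N v) = M * φ v - φ v * M)
    (hM : M * M = 0) {x : V} (hx : x ∈ range (N ^ 2)) : Q x = 0 := by
  rw [← map_eq_zero (algebraMap F (Module.End F H)), ← hφ]
  exact apply_mul_apply_eq_zero_of_mem_range_sq hNM hM hx hx

end CompatiblePair

section Trichotomy

variable {F V H : Type*} [Field F] [AddCommGroup V] [Module F V] [AddCommGroup H] [Module F H]
  {Q : QuadraticForm F V} {φ : V →ₗ[F] Module.End F H} {N : Module.End F V}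
  {M : Module.End F H}
  [CharZero F] [Nontrivial H] [FiniteDimensional F V] [FiniteDimensional F H]

theorem finrank_range_eq_two_of_sq_eq_zero (hφ : ∀ v, φ v * φ v = algebraMap F _ (Q v))
    (hQ : (polarBilin Q).Nondegenerate) (hNM : ∀ v, φ (N v) = M * φ v - φ v * M)
    (hM : M * M = 0) (hM0 : M ≠ 0) (hN0 : N ≠ 0) (hN2 : N ^ 2 = 0) :
    finrank F (range N) = 2 ∧ 4 * finrank F (range M) = finrank F H := by
  have hU : range N ≤ ker N :=
    range_le_ker_iff.mpr (by rwa [_root_.sq, Module.End.mul_eq_comp] at hN2)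
  have hupper : 2 ^ finrank F (range N) * finrank F (range M) ≤ finrank F H :=
    two_pow_finrank_mul_finrank_le hφ hQ
      (fun u hu => quadratic_eq_zero_of_mem_ker_inf_range hφ hNM hM hM0 ⟨hU hu, hu⟩)
      (fun u hu =>
        range_le_ker_iff.mpr (apply_mul_eq_zero_of_mem_ker_inf_range hNM hM ⟨hU hu, hu⟩))
  obtain ⟨v, hv⟩ : ∃ v, N v ≠ 0 := by
    by_contra! h
    exact hN0 (LinearMap.ext h)
  have hlower : finrank F H ≤ 4 * finrank F (range M) := by
    have hhalf := two_mul_finrank_range hφ hQ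
      (quadratic_eq_zero_of_mem_ker_inf_range hφ hNM hM hM0 ⟨hU ⟨v, rfl⟩, v, rfl⟩) hv
    have hsub := finrank_range_sub_le (M * φ v) (φ v * M)
    rw [← hNM] at hsub
    have := finrank_range_mul_le_left M (φ v)
    have := finrank_range_mul_le_right (φ v) M
    omega
  have hrank : finrank F (range N) ≤ 2 :=
    le_of_two_pow_mul_le_two_pow_mul (Nat.pos_of_ne_zero (finrank_range_ne_zero hM0))
      (by linarith)
  have h0 := finrank_range_ne_zero hN0
  have h1 := finrank_range_ne_one_of_apply_self_eq_zero hQ (polar_apply_self_eq_zero hφ hNM)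
  have h2 : finrank F (range N) = 2 := by omega
  rw [h2] at hupper
  exact ⟨h2, by omega⟩

theorem finrank_range_eq_two_of_sq_ne_zero (hφ : ∀ v, φ v * φ v = algebraMap F _ (Q v))
    (hQ : (polarBilin Q).Nondegenerate) (hNM : ∀ v, φ (N v) = M * φ v - φ v * M)
    (hM : M * M = 0) (hM0 : M ≠ 0) (hN2 : N ^ 2 ≠ 0) :
    finrank F (range N) = 2 ∧ finrank F (range (N ^ 2)) = 1 ∧
      2 * finrank F (range M) = finrank F H := by
  obtain ⟨v, hv⟩ : ∃ v, (N ^ 2) v ≠ 0 := by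
    by_contra! h
    exact hN2 (LinearMap.ext h)
  have hx : (N ^ 2) v ∈ range (N ^ 2) := ⟨v, rfl⟩
  have hhalf := two_mul_finrank_range hφ hQ (quadratic_eq_zero_of_mem_range_sq hφ hNM hM hx) hv
  have hMhalf : 2 * finrank F (range M) = finrank F H := by
    have hle : finrank F (range (φ ((N ^ 2) v))) ≤ finrank F (range M) := by
      rw [_root_.sq, Module.End.mul_apply, apply_apply_eq hNM hM, mul_assoc]
      exact (Submodule.finrank_mono (range_smul_le_range _ _)).trans
        (finrank_range_mul_le_left _ _)
    have := Submodule.finrank_mono (range_le_ker_iff.mpr hM)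
    have := finrank_range_add_finrank_ker M
    omega
  have hpos : 0 < finrank F (range M) := Nat.pos_of_ne_zero (finrank_range_ne_zero hM0)
  have hsq : finrank F (range (N ^ 2)) ≤ 1 := by
    have := two_pow_finrank_mul_finrank_le hφ hQ
      (fun x hx => quadratic_eq_zero_of_mem_range_sq hφ hNM hM hx)
      (fun w hw => range_le_ker_iff.mpr (apply_mul_apply_eq_zero_of_mem_range_sq hNM hM hw hx))
    rw [show finrank F (range (φ ((N ^ 2) v))) = finrank F (range M) by omega] at this
    exact le_of_two_pow_mul_le_two_pow_mul hpos (by linarith)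
  have hker : finrank F ↥(ker N ⊓ range N) ≤ 1 := by
    have := two_pow_finrank_mul_finrank_le hφ hQ
      (fun u hu => quadratic_eq_zero_of_mem_ker_inf_range hφ hNM hM hM0 hu)
      (fun u hu => range_le_ker_iff.mpr (apply_mul_eq_zero_of_mem_ker_inf_range hNM hM hu))
    exact le_of_two_pow_mul_le_two_pow_mul hpos (by linarith)
  have h0 := finrank_range_ne_zero hN2
  have h1 := finrank_range_ne_one_of_apply_self_eq_zero hQ (polar_apply_self_eq_zero hφ hNM)
  have := finrank_ker_inf_range_add_finrank_range_sq N
  exact ⟨by omega, by omega, hMhalf⟩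

end Trichotomy

theorem stmt4_general {F V H : Type*} [Field F] [CharZero F]
    [AddCommGroup V] [Module F V] [FiniteDimensional F V]
    [AddCommGroup H] [Module F H] [FiniteDimensional F H] [Nontrivial H]
    (Q : QuadraticForm F V)
    (hQ : LinearMap.BilinForm.Nondegenerate (QuadraticMap.polarBilin Q))
    (θ : CliffordAlgebra Q ≃ₐ[F] Module.End F H)
    (N : Module.End F V)
    (M : Module.End F H) (hM2 : M ^ 2 = 0)
    (hcomp : ∀ v : V, θ (CliffordAlgebra.ι Q (N v)) =
      M * θ (CliffordAlgebra.ι Q v) - θ (CliffordAlgebra.ι Q v) * M) :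
    (N = 0 ∧ M = 0) ∨
    (N ≠ 0 ∧ N ^ 2 = 0 ∧ Module.finrank F (LinearMap.range N) = 2 ∧
      4 * Module.finrank F (LinearMap.range M) = Module.finrank F H) ∨
    (N ^ 2 ≠ 0 ∧ Module.finrank F (LinearMap.range N) = 2 ∧
      Module.finrank F (LinearMap.range (N ^ 2)) = 1 ∧
      2 * Module.finrank F (LinearMap.range M) = Module.finrank F H) := by
  let φ : V →ₗ[F] Module.End F H := θ.toAlgHom.toLinearMap ∘ₗ CliffordAlgebra.ι Q
  have hφ : ∀ v, φ v * φ v = algebraMap F _ (Q v) := fun v => by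
    simp [φ, ← map_mul, CliffordAlgebra.ι_sq_scalar]
  have hM : M * M = 0 := by rwa [← _root_.sq]
  by_cases hM0 : M = 0
  · refine Or.inl ⟨LinearMap.ext fun v => injective_of_nondegenerate hφ hQ ?_, hM0⟩
    simpa [φ, hM0] using hcomp v
  have hN0 : N ≠ 0 := by
    rintro rfl
    exact hM0 <| eq_zero_of_forall_commute θ hM fun v =>
      sub_eq_zero.mp (by simpa using (hcomp v).symm)
  by_cases hN2 : N ^ 2 = 0
  · exact Or.inr <| Or.inl
      ⟨hN0, hN2, finrank_range_eq_two_of_sq_eq_zero hφ hQ hcomp hM hM0 hN0 hN2⟩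
  · exact Or.inr (Or.inr ⟨hN2, finrank_range_eq_two_of_sq_ne_zero hφ hQ hcomp hM hM0 hN2⟩)

/-- trichotomy for a square-zero-commutator pair `(N, M)` acting through a
Clifford algebra identification `Cl(q) ≃ End(H)`, for a non-degenerate quadratic space of
even dimension ≥ 4 over an algebraically closed field of characteristic zero. -/
theorem stmt4 {F V H : Type*} [Field F] [IsAlgClosed F] [CharZero F]
    [AddCommGroup V] [Module F V] [FiniteDimensional F V]
    [AddCommGroup H] [Module F H] [FiniteDimensional F H] [Nontrivial H]
    (Q : QuadraticForm F V)
    (hQ : LinearMap.BilinForm.Nondegenerate (QuadraticMap.polarBilin Q))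
    (heven : Even (Module.finrank F V)) (hdim : 4 ≤ Module.finrank F V)
    (θ : CliffordAlgebra Q ≃ₐ[F] Module.End F H)
    (N : Module.End F V) (hN3 : N ^ 3 = 0)
    (M : Module.End F H) (hM2 : M ^ 2 = 0)
    (hcomp : ∀ v : V, θ (CliffordAlgebra.ι Q (N v)) =
      M * θ (CliffordAlgebra.ι Q v) - θ (CliffordAlgebra.ι Q v) * M) :
    (N = 0 ∧ M = 0) ∨
    (N ≠ 0 ∧ N ^ 2 = 0 ∧ Module.finrank F (LinearMap.range N) = 2 ∧
      4 * Module.finrank F (LinearMap.range M) = Module.finrank F H) ∨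
    (N ^ 2 ≠ 0 ∧ Module.finrank F (LinearMap.range N) = 2 ∧
      Module.finrank F (LinearMap.range (N ^ 2)) = 1 ∧
      2 * Module.finrank F (LinearMap.range M) = Module.finrank F H) :=
  stmt4_general Q hQ θ N M hM2 hcomp
end

section
/- Let F be an algebraically closed field of characteristic zero and (V, q) a non-degenerate quadratic F-space with dim_F V ≥ 4. Let N ∈ End_F(V) be skew-adjoint for q (i.e. b_q(Nx, y) + b_q(x, Ny) = 0 for all x, y) with N^2 = 0 and rank N = 2. Then there exist vectors e_1, e_2, e'_1, e'_2 ∈ V with b_q(e_i, e_j) = 0, b_q(e'_i, e'_j) = 0, and b_q(e_i, e'_j) = δ_{ij} for i, j ∈ {1, 2}, such that N e_1 = e'_2, N e_2 = −e'_1, N e'_1 = N e'_2 = 0, and N x = 0 for every x in the orthogonal complement (with respect to b_q) of the span of {e_1, e_2, e'_1, e'_2}. -/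
/-! Because `N` is skew and `N² = 0`, the range of `N` is totally isotropic, and `N x = 0` as
soon as `x` is orthogonal to `range N`. Choose `u₁, u₂` with `B u₂ (N u₁) = 1`; then
`f₁ = N (-u₂)` and `f₂ = N u₁` are paired with `u₁, u₂` by the identity matrix, so they form a
basis of the rank-two space `range N`. Adding to `u₁, u₂` suitable multiples of `f₁, f₂` makes
them isotropic and orthogonal without changing the pairing or their images under `N`, since
`range N ⊆ ker N`. -/

open LinearMap Submodule

namespace LinearMap

variable {F V : Type*} [Field F] [AddCommGroup V] [Module F V] {B : LinearMap.BilinForm F V}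

theorem SeparatingRight.exists_apply_eq_one (hB : B.SeparatingRight) {v : V} (hv : v ≠ 0) :
    ∃ x, B x v = 1 := by
  obtain ⟨x, hx⟩ : ∃ x, B x v ≠ 0 := by
    by_contra! h
    exact hv (hB v h)
  exact ⟨(B x v)⁻¹ • x, by rw [map_smul, smul_apply, smul_eq_mul, inv_mul_cancel₀ hx]⟩

namespace IsSkewAdjoint

variable {N : Module.End F V}

theorem apply_left_eq_neg (hN : IsSkewAdjoint B N) (x y : V) : B (N x) y = -B x (N y) := by
  rw [hN x y, Pi.neg_apply, map_neg]

theorem apply_self_apply_eq_zero [NeZero (2 : F)] (hB : B.IsSymm) (hN : IsSkewAdjoint B N)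
    (x : V) : B x (N x) = 0 := by
  have h : B x (N x) = -B x (N x) := by rw [← hN.apply_left_eq_neg, hB.eq]
  rwa [eq_neg_iff_add_eq_zero, ← two_mul, mul_eq_zero, or_iff_right two_ne_zero] at h

theorem apply_apply_eq_zero_of_range_le_ker (hN : IsSkewAdjoint B N) (h : range N ≤ ker N)
    (x y : V) : B (N x) (N y) = 0 := by
  rw [hN.apply_left_eq_neg, h (mem_range_self N y), map_zero, neg_zero]

theorem map_eq_zero_of_forall_mem_range (hN : IsSkewAdjoint B N) (hB : B.SeparatingLeft)
    {x : V} (hx : ∀ v ∈ range N, B x v = 0) : N x = 0 :=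
  hB (N x) fun y => by rw [hN.apply_left_eq_neg, hx _ (mem_range_self N y), neg_zero]

end IsSkewAdjoint

namespace BilinForm

variable {u₁ u₂ f₁ f₂ : V}

theorem linearIndependent_pair_of_apply_eq
    (h₁₁ : B u₁ f₁ = 1) (h₁₂ : B u₁ f₂ = 0) (h₂₁ : B u₂ f₁ = 0) (h₂₂ : B u₂ f₂ = 1) :
    LinearIndependent F ![f₁, f₂] := by
  refine LinearIndependent.pair_iff.2 fun s t hst => ⟨?_, ?_⟩
  · simpa [h₁₁, h₁₂] using congrArg (B u₁) hst
  · simpa [h₂₁, h₂₂] using congrArg (B u₂) hst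

theorem span_pair_eq_of_apply_eq
    (h₁₁ : B u₁ f₁ = 1) (h₁₂ : B u₁ f₂ = 0) (h₂₁ : B u₂ f₁ = 0) (h₂₂ : B u₂ f₂ = 1)
    {W : Submodule F V} [FiniteDimensional F W]
    (hW : Module.finrank F W = 2) (hf₁ : f₁ ∈ W) (hf₂ : f₂ ∈ W) : span F {f₁, f₂} = W := by
  refine eq_of_le_of_finrank_eq (span_le.2 <| by rintro _ (rfl | rfl) <;> assumption) ?_
  rw [hW, ← Matrix.range_cons_cons_empty f₁ f₂ ![],
    finrank_span_eq_card (linearIndependent_pair_of_apply_eq h₁₁ h₁₂ h₂₁ h₂₂), Fintype.card_fin]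

theorem exists_isotropic_of_apply_eq [NeZero (2 : F)] (hB : B.IsSymm)
    (hf₁₁ : B f₁ f₁ = 0) (hf₁₂ : B f₁ f₂ = 0) (hf₂₂ : B f₂ f₂ = 0)
    (h₁₁ : B u₁ f₁ = 1) (h₁₂ : B u₁ f₂ = 0) (h₂₁ : B u₂ f₁ = 0) (h₂₂ : B u₂ f₂ = 1) :
    ∃ e₁ e₂ : V, e₁ - u₁ ∈ span F {f₁, f₂} ∧ e₂ - u₂ ∈ span F {f₁, f₂} ∧
      B e₁ e₁ = 0 ∧ B e₁ e₂ = 0 ∧ B e₂ e₂ = 0 ∧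
      B e₁ f₁ = 1 ∧ B e₁ f₂ = 0 ∧ B e₂ f₁ = 0 ∧ B e₂ f₂ = 1 := by
  have hf₂₁ : B f₂ f₁ = 0 := by rw [hB.eq, hf₁₂]
  have h₁₁' : B f₁ u₁ = 1 := by rw [hB.eq, h₁₁]
  have h₁₂' : B f₂ u₁ = 0 := by rw [hB.eq, h₁₂]
  have h₂₁' : B f₁ u₂ = 0 := by rw [hB.eq, h₂₁]
  have h₂₂' : B f₂ u₂ = 1 := by rw [hB.eq, h₂₂]
  refine ⟨u₁ - (B u₁ u₁ / 2) • f₁ - B u₁ u₂ • f₂, u₂ - (B u₂ u₂ / 2) • f₂,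
    mem_span_pair.2 ⟨-(B u₁ u₁ / 2), -B u₁ u₂, by module⟩,
    mem_span_pair.2 ⟨0, -(B u₂ u₂ / 2), by module⟩, ?_⟩
  simp only [map_sub, map_smul, LinearMap.sub_apply, LinearMap.smul_apply, smul_eq_mul, hf₁₁,
    hf₁₂, hf₂₁, hf₂₂, h₁₁, h₁₂, h₂₁, h₂₂, h₁₁', h₁₂', h₂₁', h₂₂']
  refine ⟨?_, ?_, ?_, ?_, ?_, ?_, ?_⟩ <;> field_simp <;> ring

end BilinForm

end LinearMap

theorem stmt6_general {F V : Type*} [Field F] [CharZero F]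
    [AddCommGroup V] [Module F V] [FiniteDimensional F V]
    (B : LinearMap.BilinForm F V) (hsymm : ∀ x y : V, B x y = B y x)
    (hB : B.Nondegenerate)
    (N : Module.End F V)
    (hskew : ∀ x y : V, B (N x) y + B x (N y) = 0)
    (hN2 : N ^ 2 = 0)
    (hrk : Module.finrank F (LinearMap.range N) = 2) :
    ∃ e₁ e₂ e₁' e₂' : V,
      (B e₁ e₁ = 0 ∧ B e₁ e₂ = 0 ∧ B e₂ e₁ = 0 ∧ B e₂ e₂ = 0) ∧
      (B e₁' e₁' = 0 ∧ B e₁' e₂' = 0 ∧ B e₂' e₁' = 0 ∧ B e₂' e₂' = 0) ∧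
      (B e₁ e₁' = 1 ∧ B e₁ e₂' = 0 ∧ B e₂ e₁' = 0 ∧ B e₂ e₂' = 1) ∧
      N e₁ = e₂' ∧ N e₂ = -e₁' ∧ N e₁' = 0 ∧ N e₂' = 0 ∧
      ∀ x : V, B e₁ x = 0 → B e₂ x = 0 → B e₁' x = 0 → B e₂' x = 0 → N x = 0 := by
  have hBsymm : B.IsSymm := ⟨hsymm⟩
  have hN : IsSkewAdjoint B N := fun x y => by
    rw [Pi.neg_apply, map_neg, eq_neg_iff_add_eq_zero, hskew]
  have hNN : range N ≤ ker N := range_le_ker_iff.2 (by rwa [sq] at hN2)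
  have hiso : ∀ x y, B (N x) (N y) = 0 := hN.apply_apply_eq_zero_of_range_le_ker hNN
  have hrange : range N ≠ ⊥ := by rw [Ne, ← finrank_eq_zero, hrk]; exact two_ne_zero
  obtain ⟨_, ⟨u₁, rfl⟩, hu₁⟩ := exists_mem_ne_zero_of_ne_bot hrange
  obtain ⟨u₂, h₂₂⟩ := hB.2.exists_apply_eq_one hu₁
  have h₁₁ : B u₁ (N (-u₂)) = 1 := by
    rw [map_neg, map_neg, ← hN.apply_left_eq_neg, hBsymm.eq, h₂₂]
  have h₁₂ : B u₁ (N u₁) = 0 := hN.apply_self_apply_eq_zero hBsymm u₁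
  have h₂₁ : B u₂ (N (-u₂)) = 0 := by
    rw [map_neg, map_neg, hN.apply_self_apply_eq_zero hBsymm, neg_zero]
  obtain ⟨e₁, e₂, he₁, he₂, g₁₁, g₁₂, g₂₂, d₁₁, d₁₂, d₂₁, d₂₂⟩ :=
    BilinForm.exists_isotropic_of_apply_eq hBsymm (hiso _ _) (hiso _ _) (hiso _ _) h₁₁ h₁₂ h₂₁ h₂₂
  have hspan := BilinForm.span_pair_eq_of_apply_eq h₁₁ h₁₂ h₂₁ h₂₂ hrk
    (mem_range_self _ _) (mem_range_self _ _)
  have hker : span F {N (-u₂), N u₁} ≤ ker N := hspan ▸ hNN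
  refine ⟨e₁, e₂, N (-u₂), N u₁, ⟨g₁₁, g₁₂, hBsymm.eq e₂ e₁ ▸ g₁₂, g₂₂⟩,
    ⟨hiso _ _, hiso _ _, hiso _ _, hiso _ _⟩, ⟨d₁₁, d₁₂, d₂₁, d₂₂⟩, ?_, ?_,
    hNN (mem_range_self _ _), hNN (mem_range_self _ _), ?_⟩
  · rw [← sub_eq_zero, ← map_sub]; exact hker he₁
  · rw [map_neg, neg_neg, ← sub_eq_zero, ← map_sub]; exact hker he₂
  · intro x _ _ hx₁ hx₂
    rw [← hsymm] at hx₁ hx₂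
    refine hN.map_eq_zero_of_forall_mem_range hB.1 fun v hv => ?_
    obtain ⟨a, b, rfl⟩ := mem_span_pair.1 (hspan ▸ hv)
    simp only [map_add, map_smul, hx₁, hx₂, smul_zero, add_zero]

/-- normal form of a skew-adjoint square-zero operator of rank 2 on a
non-degenerate quadratic space of dimension ≥ 4 over an algebraically closed field of
characteristic zero (the quadratic space is encoded by its associated non-degenerate
symmetric bilinear form `B`). -/
theorem stmt6 {F V : Type*} [Field F] [IsAlgClosed F] [CharZero F]
    [AddCommGroup V] [Module F V] [FiniteDimensional F V]
    (B : LinearMap.BilinForm F V) (hsymm : ∀ x y : V, B x y = B y x)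
    (hB : B.Nondegenerate)
    (hdim : 4 ≤ Module.finrank F V)
    (N : Module.End F V)
    (hskew : ∀ x y : V, B (N x) y + B x (N y) = 0)
    (hN2 : N ^ 2 = 0)
    (hrk : Module.finrank F (LinearMap.range N) = 2) :
    ∃ e₁ e₂ e₁' e₂' : V,
      (B e₁ e₁ = 0 ∧ B e₁ e₂ = 0 ∧ B e₂ e₁ = 0 ∧ B e₂ e₂ = 0) ∧
      (B e₁' e₁' = 0 ∧ B e₁' e₂' = 0 ∧ B e₂' e₁' = 0 ∧ B e₂' e₂' = 0) ∧
      (B e₁ e₁' = 1 ∧ B e₁ e₂' = 0 ∧ B e₂ e₁' = 0 ∧ B e₂ e₂' = 1) ∧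
      N e₁ = e₂' ∧ N e₂ = -e₁' ∧ N e₁' = 0 ∧ N e₂' = 0 ∧
      ∀ x : V, B e₁ x = 0 → B e₂ x = 0 → B e₁' x = 0 → B e₂' x = 0 → N x = 0 :=
  stmt6_general B hsymm hB N hskew hN2 hrk
end

section
/- Let F be an algebraically closed field of characteristic zero and (V, q) a non-degenerate quadratic F-space with dim_F V ≥ 4. Let N ∈ End_F(V) be skew-adjoint for q (i.e. b_q(Nx, y) + b_q(x, Ny) = 0 for all x, y), nilpotent, with rank N = 2 and rank N^2 = 1. Then there exist vectors e_1, e_2, e'_1, e'_2 ∈ V with b_q(e_i, e_j) = 0, b_q(e'_i, e'_j) = 0, and b_q(e_i, e'_j) = δ_{ij} for i, j ∈ {1, 2}, such that N e_1 = e_2 + e'_2, N e_2 = −e'_1, N e'_2 = −e'_1, N e'_1 = 0, and N x = 0 for every x in the orthogonal complement (with respect to b_q) of the span of {e_1, e_2, e'_1, e'_2}. -/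
/-!
Skewness gives `B x (N x) = 0` and makes `(x, y) ↦ B x (N² y)` symmetric, and `N³ = 0` because
`N` acts nilpotently on the line `range N²`. A vector `p` with `B p (N² p) ≠ 0`, made isotropic
by adding a multiple of `N² p` and rescaled, spans with `N p` and `N² p` a subspace on which `B`
has an invertible Gram matrix, so `V` is that span plus its orthogonal complement, and since
`dim V ≥ 4` the complement contains a vector `w` with `B w w = -2`. As `range N = span {N p, N² p}`
and `ker N = (range N)ᗮ`, also `N w = 0`, and `e₁ = p`, `e₂ = (N p + w) / 2`,
`e₁' = -N² p / 2`, `e₂' = (N p - w) / 2` is the required basis.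
-/

namespace Module.End

open LinearMap Submodule

variable {F V : Type*} [Field F] [AddCommGroup V] [Module F V]

theorem pow_finrank_eq_zero_of_isNilpotent [FiniteDimensional F V]
    {N : Module.End F V} (hN : IsNilpotent N) : N ^ finrank F V = 0 := by
  simpa [hN.charpoly_eq_X_pow_finrank] using N.aeval_self_charpoly

theorem pow_succ_eq_zero_of_finrank_range_pow_le_one [FiniteDimensional F V]
    {N : Module.End F V} (hN : IsNilpotent N) {k : ℕ}
    (hk : finrank F (range (N ^ k)) ≤ 1) : N ^ (k + 1) = 0 := by
  have hmaps : Set.MapsTo N (range (N ^ k)) (range (N ^ k)) := by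
    rintro _ ⟨y, rfl⟩
    exact ⟨N y, by rw [← Module.End.mul_apply, ← pow_succ, pow_succ', Module.End.mul_apply]⟩
  have hres : N.restrict hmaps = 0 := by
    simpa using pow_eq_zero_of_le hk
      (pow_finrank_eq_zero_of_isNilpotent (Module.End.isNilpotent.restrict hmaps hN))
  ext x
  rw [pow_succ', Module.End.mul_apply, LinearMap.zero_apply]
  exact congr_arg Subtype.val (LinearMap.congr_fun hres ⟨(N ^ k) x, mem_range_self _ x⟩)

theorem linearIndependent_pair_apply {f : Module.End F V} {x : V} (h₁ : f x ≠ 0)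
    (h₂ : f (f x) = 0) : LinearIndependent F ![x, f x] := by
  refine LinearIndependent.pair_iff.mpr fun s t hst => ?_
  obtain rfl : s = 0 := by
    have := congr_arg f hst
    rw [map_add, map_smul, map_smul, h₂, smul_zero, add_zero, map_zero] at this
    exact (smul_eq_zero.mp this).resolve_right h₁
  rw [zero_smul, zero_add] at hst
  exact ⟨rfl, (smul_eq_zero.mp hst).resolve_right h₁⟩

theorem range_eq_span_pair_of_finrank_range_eq_two [FiniteDimensional F V] {f : Module.End F V}
    (hf : finrank F (range f) = 2) {x : V} (h₁ : f (f x) ≠ 0) (h₂ : f (f (f x)) = 0) :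
    range f = span F {f x, f (f x)} := by
  have hli := linearIndependent_pair_apply h₁ h₂
  refine (eq_of_le_of_finrank_eq ?_ ?_).symm
  · exact span_le.mpr (Set.insert_subset_iff.mpr ⟨mem_range_self f x, by simp⟩)
  · rw [hf, ← Matrix.range_cons_cons_empty (f x) (f (f x)) ![], finrank_span_eq_card hli,
      Fintype.card_fin]

end Module.End

theorem Submodule.span_triple_ne_top_of_lt_finrank {F V : Type*} [Field F] [AddCommGroup V]
    [Module F V] (h : 3 < Module.finrank F V) (a b c : V) : Submodule.span F {a, b, c} ≠ ⊤ := by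
  classical
  intro htop
  have := finrank_span_finset_le_card (R := F) ({a, b, c} : Finset V)
  rw [Finset.coe_insert, Finset.coe_insert, Finset.coe_singleton, Set.finrank, htop,
    finrank_top] at this
  have := Finset.card_le_three (a := a) (b := b) (c := c)
  omega

namespace LinearMap.BilinForm

open Submodule

variable {F V : Type*} [Field F] [AddCommGroup V] [Module F V] {B : LinearMap.BilinForm F V}
  {N : Module.End F V}

theorem apply_apply_self_eq_zero [NeZero (2 : F)] (hB : B.IsSymm)
    (hN : ∀ x y, B (N x) y + B x (N y) = 0) (x : V) : B x (N x) = 0 := by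
  have h : (2 : F) * B x (N x) = 0 := by linear_combination hN x x - hB.eq (N x) x
  exact (mul_eq_zero.mp h).resolve_left two_ne_zero

theorem exists_apply_apply_apply_ne_zero [NeZero (2 : F)] (hB : B.IsSymm)
    (hB' : B.SeparatingLeft) (hN : ∀ x y, B (N x) y + B x (N y) = 0) (hN2 : N ^ 2 ≠ 0) :
    ∃ v, B v (N (N v)) ≠ 0 := by
  let _ := invertibleOfNonzero (two_ne_zero : (2 : F) ≠ 0)
  have hsq : ∀ x y, B x ((N ^ 2) y) = B ((N ^ 2) x) y := fun x y => by
    simp only [pow_two, Module.End.mul_apply]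
    linear_combination hN x (N y) - hN (N x) y
  obtain ⟨y, hy⟩ : ∃ y, (N ^ 2) y ≠ 0 := by
    by_contra! h
    exact hN2 (LinearMap.ext h)
  obtain ⟨x, hx⟩ : ∃ x, B ((N ^ 2) y) x ≠ 0 := by
    by_contra! h
    exact hy (hB' _ h)
  have hsymm : (B.compl₂ (N ^ 2)).IsSymm :=
    ⟨fun x y => by rw [compl₂_apply, compl₂_apply, hsq, hB.eq, RingHom.id_apply]⟩
  have hne : B.compl₂ (N ^ 2) ≠ 0 := fun h =>
    hx (by rw [← hsq, ← compl₂_apply, h]; rfl)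
  simpa [pow_two] using exists_bilinForm_self_ne_zero hne hsymm

theorem exists_apply_self_eq_zero_apply_apply_apply_eq [IsAlgClosed F] [NeZero (2 : F)]
    (hB : B.IsSymm) (hB' : B.SeparatingLeft) (hN : ∀ x y, B (N x) y + B x (N y) = 0)
    (hN2 : N ^ 2 ≠ 0) (hN3 : ∀ x, N (N (N x)) = 0) (c : F) :
    ∃ p, B p p = 0 ∧ B p (N (N p)) = c := by
  obtain ⟨v, hv⟩ := exists_apply_apply_apply_ne_zero hB hB' hN hN2
  have hrr : B (N (N v)) (N (N v)) = 0 := by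
    rw [eq_neg_of_add_eq_zero_left (hN _ _), hN3, map_zero, neg_zero]
  -- `v + t • N² v` is isotropic for the right `t`, and has the same image under `N²`.
  obtain ⟨t, ht⟩ : ∃ t, B v v + 2 * t * B v (N (N v)) = 0 :=
    ⟨-B v v / (2 * B v (N (N v))), by field_simp; ring⟩
  obtain ⟨l, hl⟩ : ∃ l, l * l * B v (N (N v)) = c := by
    obtain ⟨l, hl⟩ := IsAlgClosed.exists_eq_mul_self (c / B v (N (N v)))
    exact ⟨l, by rw [← hl]; field_simp⟩
  refine ⟨l • (v + t • N (N v)), ?_, ?_⟩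
  · simp only [map_add, map_smul, LinearMap.add_apply, LinearMap.smul_apply, smul_eq_mul, hrr,
      hB.eq (N (N v)) v]
    linear_combination l * l * ht
  · simp only [map_add, map_smul, LinearMap.add_apply, LinearMap.smul_apply, smul_eq_mul, hN3,
      smul_zero, add_zero, hrr]
    linear_combination hl

theorem exists_mem_orthogonal_apply_self_ne_zero [NeZero (2 : F)] (hB : B.IsSymm)
    (hB' : B.SeparatingLeft) {W : Submodule F V} (hW : W ⊔ B.orthogonal W = ⊤) (hW' : W ≠ ⊤) :
    ∃ w ∈ B.orthogonal W, B w w ≠ 0 := by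
  let _ := invertibleOfNonzero (two_ne_zero : (2 : F) ≠ 0)
  obtain ⟨u, hu, hu0⟩ := exists_mem_ne_zero_of_ne_bot (p := B.orthogonal W) fun h =>
    hW' (by rwa [h, sup_bot_eq] at hW)
  obtain ⟨y, hy⟩ : ∃ y, B u y ≠ 0 := by
    by_contra! h
    exact hu0 (hB' u h)
  obtain ⟨a, ha, b, hb, rfl⟩ := mem_sup.mp (hW ▸ mem_top : y ∈ W ⊔ B.orthogonal W)
  have hua : B u a = 0 := by rw [hB.eq]; exact hu a ha
  have hne : B.restrict (B.orthogonal W) ≠ 0 := fun h => hy <| by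
    simpa [hua] using LinearMap.congr_fun₂ h ⟨u, hu⟩ ⟨b, hb⟩
  obtain ⟨⟨w, hw⟩, hww⟩ := exists_bilinForm_self_ne_zero hne (isSymm_iff.mp (hB.restrict _))
  exact ⟨w, hw, hww⟩

theorem exists_mem_orthogonal_apply_self_eq [IsAlgClosed F] [NeZero (2 : F)] (hB : B.IsSymm)
    (hB' : B.SeparatingLeft) {W : Submodule F V} (hW : W ⊔ B.orthogonal W = ⊤) (hW' : W ≠ ⊤)
    (c : F) : ∃ w ∈ B.orthogonal W, B w w = c := by
  obtain ⟨w, hw, hww⟩ := exists_mem_orthogonal_apply_self_ne_zero hB hB' hW hW'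
  obtain ⟨l, hl⟩ := IsAlgClosed.exists_eq_mul_self (c / B w w)
  refine ⟨l • w, smul_mem _ l hw, ?_⟩
  rw [map_smul, map_smul, LinearMap.smul_apply, smul_eq_mul, smul_eq_mul, ← mul_assoc, ← hl]
  field_simp

theorem apply_eq_zero_of_range_le_ker (hB' : B.SeparatingLeft)
    (hN : ∀ x y, B (N x) y + B x (N y) = 0) {x : V} (hx : range N ≤ ker (B x)) : N x = 0 :=
  hB' _ fun y => by rw [eq_neg_of_add_eq_zero_left (hN x y), mem_ker.mp (hx (mem_range_self N y)),
    neg_zero]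

theorem mem_orthogonal_span_iff {s : Set V} {m : V} :
    m ∈ B.orthogonal (span F s) ↔ ∀ n ∈ s, B n m = 0 :=
  ⟨fun h n hn => h n (subset_span hn),
    fun h _ hn => (span_le (p := ker (B.flip m))).mpr h hn⟩

theorem span_sup_orthogonal_span_eq_top [NeZero (2 : F)] (hB : B.IsSymm)
    (hN : ∀ x y, B (N x) y + B x (N y) = 0) {p : V} (hp : B p p = 0)
    (hc : B p (N (N p)) ≠ 0) (hN3 : N (N (N p)) = 0) :
    span F {p, N p, N (N p)} ⊔ B.orthogonal (span F {p, N p, N (N p)}) = ⊤ := by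
  set c := B p (N (N p))
  have hpq := apply_apply_self_eq_zero hB hN p
  have hqr := apply_apply_self_eq_zero hB hN (N p)
  have hqq : B (N p) (N p) = -c := eq_neg_of_add_eq_zero_left (hN p (N p))
  have hrr : B (N (N p)) (N (N p)) = 0 := by
    rw [eq_neg_of_add_eq_zero_left (hN _ _), hN3, map_zero, neg_zero]
  refine eq_top_iff'.mpr fun y => mem_sup.mpr ?_
  -- the `B`-orthogonal projection of `y` onto the span, read off from the Gram matrix
  let π := (B (N (N p)) y / c) • p - (B (N p) y / c) • N p + (B p y / c) • N (N p)
  refine ⟨π, ?_, y - π, ?_, add_sub_cancel _ _⟩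
  · exact add_mem (sub_mem (smul_mem _ _ (subset_span (by simp)))
      (smul_mem _ _ (subset_span (by simp)))) (smul_mem _ _ (subset_span (by simp)))
  · simp only [mem_orthogonal_span_iff, Set.mem_insert_iff, Set.mem_singleton_iff,
      forall_eq_or_imp, forall_eq]
    simp only [π, map_add, map_sub, map_smul, smul_eq_mul, hp, hpq, hqr, hqq, hrr,
      hB.eq (N p) p, hB.eq (N (N p)) p, hB.eq (N (N p)) (N p)]
    refine ⟨?_, ?_, ?_⟩ <;> field_simp <;> ring

theorem exists_normal_form_of_chain [NeZero (2 : F)] (hB : B.IsSymm) (hB' : B.SeparatingLeft)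
    (hN : ∀ x y, B (N x) y + B x (N y) = 0) {p w : V} (hp : B p p = 0)
    (hpr : B p (N (N p)) = -2) (hN3 : N (N (N p)) = 0) (hrange : range N = span F {N p, N (N p)})
    (hw : w ∈ B.orthogonal (span F {p, N p, N (N p)})) (hww : B w w = -2) :
    ∃ e₁ e₂ e₁' e₂' : V,
      (B e₁ e₁ = 0 ∧ B e₁ e₂ = 0 ∧ B e₂ e₁ = 0 ∧ B e₂ e₂ = 0) ∧
      (B e₁' e₁' = 0 ∧ B e₁' e₂' = 0 ∧ B e₂' e₁' = 0 ∧ B e₂' e₂' = 0) ∧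
      (B e₁ e₁' = 1 ∧ B e₁ e₂' = 0 ∧ B e₂ e₁' = 0 ∧ B e₂ e₂' = 1) ∧
      N e₁ = e₂ + e₂' ∧ N e₂ = -e₁' ∧ N e₂' = -e₁' ∧ N e₁' = 0 ∧
      ∀ x : V, B e₁ x = 0 → B e₂ x = 0 → B e₁' x = 0 → B e₂' x = 0 → N x = 0 := by
  have hker : ∀ x, B (N p) x = 0 → B (N (N p)) x = 0 → N x = 0 := fun x h₁ h₂ =>
    apply_eq_zero_of_range_le_ker hB' hN <| hrange ▸ span_le.mpr <| by
      simp [Set.insert_subset_iff, hB.eq x, h₁, h₂]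
  have hpq := apply_apply_self_eq_zero hB hN p
  have hqr := apply_apply_self_eq_zero hB hN (N p)
  have hqq : B (N p) (N p) = 2 := by rw [eq_neg_of_add_eq_zero_left (hN p (N p)), hpr, neg_neg]
  have hrr : B (N (N p)) (N (N p)) = 0 := by
    rw [eq_neg_of_add_eq_zero_left (hN _ _), hN3, map_zero, neg_zero]
  obtain ⟨hpw, hqw, hrw⟩ : B p w = 0 ∧ B (N p) w = 0 ∧ B (N (N p)) w = 0 := by
    rw [mem_orthogonal_span_iff] at hw
    exact ⟨hw p (by simp), hw (N p) (by simp), hw (N (N p)) (by simp)⟩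
  have hNw : N w = 0 := hker w hqw hrw
  have hwp := hB.eq w p
  have hwq := hB.eq w (N p)
  have hwr := hB.eq w (N (N p))
  have hqp := hB.eq (N p) p
  have hrq := hB.eq (N (N p)) (N p)
  have hq : N p = (2⁻¹ : F) • (N p + w) + (2⁻¹ : F) • (N p - w) := by
    match_scalars <;> field_simp <;> ring
  have hr : N (N p) = (-2 : F) • -((2⁻¹ : F) • N (N p)) := by
    match_scalars
    field_simp
  refine ⟨p, (2⁻¹ : F) • (N p + w), -((2⁻¹ : F) • N (N p)), (2⁻¹ : F) • (N p - w),
    ?_, ?_, ?_, hq, by simp [hNw], by simp [hNw], by simp [hN3], fun x _ h₂ h₃ h₄ => hker x ?_ ?_⟩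
  rotate_right 2
  · rw [hq, map_add, LinearMap.add_apply, h₂, h₄, add_zero]
  · rw [hr, map_smul, LinearMap.smul_apply, h₃, smul_zero]
  all_goals
    simp only [map_add, map_sub, map_neg, map_smul, LinearMap.add_apply, LinearMap.sub_apply,
      LinearMap.neg_apply, LinearMap.smul_apply, smul_eq_mul, hp, hpr, hpq, hqr, hqq, hrr, hww,
      hpw, hqw, hrw, hwp, hwq, hwr, hqp, hrq]
    simp [two_ne_zero, ← two_mul]

end LinearMap.BilinForm

/-- normal form of a skew-adjoint nilpotent operator with rank N = 2 and
rank N² = 1 on a non-degenerate quadratic space of dimension ≥ 4 over an algebraically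
closed field of characteristic zero (the quadratic space is encoded by its associated
non-degenerate symmetric bilinear form `B`). -/
theorem stmt7 {F V : Type*} [Field F] [IsAlgClosed F] [CharZero F]
    [AddCommGroup V] [Module F V] [FiniteDimensional F V]
    (B : LinearMap.BilinForm F V) (hsymm : ∀ x y : V, B x y = B y x)
    (hB : B.Nondegenerate)
    (hdim : 4 ≤ Module.finrank F V)
    (N : Module.End F V)
    (hskew : ∀ x y : V, B (N x) y + B x (N y) = 0)
    (hnil : IsNilpotent N)
    (hrk : Module.finrank F (LinearMap.range N) = 2)
    (hrk2 : Module.finrank F (LinearMap.range (N ^ 2)) = 1) :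
    ∃ e₁ e₂ e₁' e₂' : V,
      (B e₁ e₁ = 0 ∧ B e₁ e₂ = 0 ∧ B e₂ e₁ = 0 ∧ B e₂ e₂ = 0) ∧
      (B e₁' e₁' = 0 ∧ B e₁' e₂' = 0 ∧ B e₂' e₁' = 0 ∧ B e₂' e₂' = 0) ∧
      (B e₁ e₁' = 1 ∧ B e₁ e₂' = 0 ∧ B e₂ e₁' = 0 ∧ B e₂ e₂' = 1) ∧
      N e₁ = e₂ + e₂' ∧ N e₂ = -e₁' ∧ N e₂' = -e₁' ∧ N e₁' = 0 ∧
      ∀ x : V, B e₁ x = 0 → B e₂ x = 0 → B e₁' x = 0 → B e₂' x = 0 → N x = 0 := by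
  have hBs : B.IsSymm := ⟨hsymm⟩
  have hN3 : ∀ x, N (N (N x)) = 0 := fun x => by
    simpa [pow_succ] using LinearMap.congr_fun
      (Module.End.pow_succ_eq_zero_of_finrank_range_pow_le_one hnil hrk2.le) x
  have hN2 : N ^ 2 ≠ 0 := fun h => by
    rw [h, LinearMap.range_zero, finrank_bot] at hrk2
    exact zero_ne_one hrk2
  obtain ⟨p, hp, hpr⟩ :=
    LinearMap.BilinForm.exists_apply_self_eq_zero_apply_apply_apply_eq hBs hB.1 hskew hN2 hN3 (-2)
  have hr : N (N p) ≠ 0 := fun h => by simp [h] at hpr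
  obtain ⟨w, hw, hww⟩ :=
    LinearMap.BilinForm.exists_mem_orthogonal_apply_self_eq hBs hB.1
      (LinearMap.BilinForm.span_sup_orthogonal_span_eq_top hBs hskew hp (by simp [hpr]) (hN3 p))
      (Submodule.span_triple_ne_top_of_lt_finrank hdim _ _ _) (-2)
  exact LinearMap.BilinForm.exists_normal_form_of_chain hBs hB.1 hskew hp hpr (hN3 p)
    (Module.End.range_eq_span_pair_of_finrank_range_eq_two hrk hr (hN3 p)) hw hww
end

section
/- Let F be a field of characteristic zero, V a finite-dimensional F-vector space, and N ∈ End_F(V) with N ∘ N = 0 and s := rank N ≥ 1. Let k be an integer with 1 ≤ k ≤ dim_F V − s, and let D be the endomorphism of the k-th exterior power ⋀^k V determined by D(v_1 ∧ ⋯ ∧ v_k) = Σ_{j=1}^{k} v_1 ∧ ⋯ ∧ N v_j ∧ ⋯ ∧ v_k. Then D is nilpotent with nilpotency index ν(D) = min(k, s). -/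
open Module Function Finset exteriorPower
open scoped Nat

theorem nuIdx_eq_of_pow_succ_eq_zero {R M : Type*} [CommSemiring R] [AddCommMonoid M]
    [Module R M] {D : Module.End R M} {m : ℕ} (h : D ^ (m + 1) = 0) (hm : D ^ m ≠ 0) :
    nuIdx D = m := by
  refine le_antisymm (Nat.sInf_le h) (le_csInf ⟨m, h⟩ fun n hn => ?_)
  by_contra! hnm
  exact hm (pow_eq_zero_of_le hnm hn)

theorem Finset.sum_powersetCard_sum_compl_insert {α M : Type*} [Fintype α] [DecidableEq α]
    [AddCommMonoid M] (m : ℕ) (f : Finset α → M) :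
    ∑ S ∈ powersetCard m univ, ∑ j ∈ Sᶜ, f (insert j S) =
      (m + 1) • ∑ T ∈ powersetCard (m + 1) univ, f T := by
  have hT : (m + 1) • ∑ T ∈ powersetCard (m + 1) univ, f T =
      ∑ T ∈ powersetCard (m + 1) univ, ∑ _j ∈ T, f T := by
    rw [smul_sum]
    refine sum_congr rfl fun T hT => ?_
    rw [sum_const, (mem_powersetCard.mp hT).2]
  rw [hT, sum_sigma', sum_sigma']
  refine sum_nbij' (fun p => ⟨insert p.2 p.1, p.2⟩) (fun q => ⟨q.1.erase q.2, q.2⟩)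
    ?_ ?_ ?_ ?_ fun _ _ => rfl
  · rintro ⟨S, j⟩ hp
    simp only [mem_sigma, mem_powersetCard, mem_compl] at hp ⊢
    exact ⟨⟨subset_univ _, by rw [card_insert_of_notMem hp.2, hp.1.2]⟩, mem_insert_self _ _⟩
  · rintro ⟨T, j⟩ hq
    simp only [mem_sigma, mem_powersetCard, mem_compl] at hq ⊢
    exact ⟨⟨subset_univ _, by rw [card_erase_of_mem hq.2, hq.1.2]; rfl⟩, notMem_erase _ _⟩
  · rintro ⟨S, j⟩ hp
    simp only [mem_sigma, mem_compl] at hp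
    simp [erase_insert hp.2]
  · rintro ⟨T, j⟩ hq
    simp only [mem_sigma] at hq
    simp [insert_erase hq.2]

theorem exteriorPower.ιMulti_ne_zero_of_linearIndependent {K E : Type*} [Field K]
    [AddCommGroup E] [Module K E] {n : ℕ} {v : Fin n → E} (hv : LinearIndependent K v) :
    ιMulti K n v ≠ 0 := by
  simpa [ιMulti_family] using (ιMulti_family_linearIndependent_field n hv).ne_zero
    (Set.powersetCard.ofFinEmbEquiv (RelEmbedding.refl _))

theorem exists_linearIndependent_fin_append {K W : Type*} [Field K] [AddCommGroup W]
    [Module K W] [FiniteDimensional K W] {m : ℕ} {y : Fin m → W} (hy : LinearIndependent K y) :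
    ∀ {r : ℕ}, m + r ≤ finrank K W → ∃ z : Fin r → W, LinearIndependent K (Fin.append y z)
  | 0, _ => ⟨Fin.elim0, by rw [Fin.append_elim0]; exact hy.comp _ (Fin.cast_injective _)⟩
  | r + 1, h => by
    obtain ⟨z, hz⟩ := exists_linearIndependent_fin_append hy (r := r) (by omega)
    obtain ⟨x, hx⟩ := exists_linearIndependent_snoc_of_lt_finrank hz (by omega)
    exact ⟨Fin.snoc z x, by rwa [Fin.append_snoc]⟩

namespace exteriorPower

section CommRing

variable {R M : Type*} [CommRing R] [AddCommGroup M] [Module R M] {k : ℕ}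

def IsInducedDerivation (N : Module.End R M) (D : Module.End R (⋀[R]^k M)) : Prop :=
  ∀ v : Fin k → M, D (ιMulti R k v) = ∑ j, ιMulti R k (update v j (N (v j)))

namespace IsInducedDerivation

variable {N : Module.End R M} {D : Module.End R (⋀[R]^k M)}

theorem apply_ιMulti_piecewise (hD : IsInducedDerivation N D) (hN : N ∘ₗ N = 0)
    (S : Finset (Fin k)) (v : Fin k → M) :
    D (ιMulti R k (S.piecewise (N ∘ v) v)) =
      ∑ j ∈ Sᶜ, ιMulti R k ((insert j S).piecewise (N ∘ v) v) := by
  rw [hD, ← sum_compl_add_sum S, sum_eq_zero (s := S) fun j hj => ?_, add_zero]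
  · refine sum_congr rfl fun j hj => ?_
    rw [piecewise_insert, piecewise_eq_of_notMem _ _ _ (mem_compl.mp hj)]
    rfl
  · refine (ιMulti R k).map_coord_zero j ?_
    rw [update_self, piecewise_eq_of_mem _ _ _ hj]
    exact LinearMap.congr_fun hN (v j)

theorem pow_apply_ιMulti (hD : IsInducedDerivation N D) (hN : N ∘ₗ N = 0) (m : ℕ)
    (v : Fin k → M) :
    (D ^ m) (ιMulti R k v) =
      m ! • ∑ S ∈ powersetCard m univ, ιMulti R k (S.piecewise (N ∘ v) v) := by
  induction m with
  | zero => simp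
  | succ m ih =>
    rw [pow_succ', Module.End.mul_apply, ih, map_nsmul, map_sum,
      sum_congr rfl fun S _ => hD.apply_ιMulti_piecewise hN S v,
      sum_powersetCard_sum_compl_insert m fun T => ιMulti R k (T.piecewise (N ∘ v) v),
      smul_smul, Nat.factorial_succ, mul_comm]

theorem pow_apply_ιMulti_of_card_eq (hD : IsInducedDerivation N D) (hN : N ∘ₗ N = 0)
    {S : Finset (Fin k)} {m : ℕ} (hS : S.card = m) {v : Fin k → M}
    (hv : ∀ j ∉ S, N (v j) = 0) :
    (D ^ m) (ιMulti R k v) = m ! • ιMulti R k (S.piecewise (N ∘ v) v) := by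
  rw [hD.pow_apply_ιMulti hN, sum_eq_single_of_mem S (mem_powersetCard.mpr ⟨subset_univ _, hS⟩)]
  intro T hT hTS
  obtain ⟨j, hjT, hjS⟩ : ∃ j ∈ T, j ∉ S := not_subset.mp fun hsub =>
    hTS (eq_of_subset_of_card_le hsub (by rw [hS, (mem_powersetCard.mp hT).2]))
  refine (ιMulti R k).map_coord_zero j ?_
  rw [piecewise_eq_of_mem _ _ _ hjT]
  exact hv j hjS

theorem pow_eq_zero_of_lt (hD : IsInducedDerivation N D) (hN : N ∘ₗ N = 0) {n : ℕ}
    (hn : k < n) : D ^ n = 0 :=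
  linearMap_ext <| AlternatingMap.ext fun v => by
    simp [hD.pow_apply_ιMulti hN,
      (powersetCard_eq_empty (s := (univ : Finset (Fin k)))).mpr (by simpa using hn)]

end IsInducedDerivation

end CommRing

end exteriorPower

section Field

variable {K V : Type*} [Field K] [AddCommGroup V] [Module K V] {N : Module.End K V}

theorem exists_linearIndependent_ker_range_of_le [FiniteDimensional K V] (hN : N ∘ₗ N = 0)
    {m k : ℕ} (hm : m ≤ finrank K (LinearMap.range N)) (hmk : m ≤ k)
    (hk : k ≤ finrank K (LinearMap.ker N)) :
    ∃ (w : Fin k → V) (S : Finset (Fin k)), LinearIndependent K w ∧ (∀ j, N (w j) = 0) ∧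
      S.card = m ∧ ∀ j ∈ S, w j ∈ LinearMap.range N := by
  obtain ⟨r, rfl⟩ := Nat.exists_eq_add_of_le hmk
  obtain ⟨f, hf⟩ := exists_linearIndependent_of_le_finrank hm
  have hRK := LinearMap.range_le_ker_iff.mpr hN
  obtain ⟨z, hz⟩ := exists_linearIndependent_fin_append
    (hf.map' _ (Submodule.ker_inclusion _ _ hRK)) hk
  refine ⟨(LinearMap.ker N).subtype ∘ Fin.append (Submodule.inclusion hRK ∘ f) z,
    univ.map (Fin.castAddEmb r), hz.map' _ (LinearMap.ker N).ker_subtype,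
    fun j => (Fin.append _ z j).2, by simp, ?_⟩
  simpa [Fin.append_left] using fun i => LinearMap.mem_range.mp (f i).2

namespace exteriorPower.IsInducedDerivation

variable {k : ℕ} {D : Module.End K (⋀[K]^k V)}

theorem pow_eq_zero_of_finrank_range_lt [FiniteDimensional K V] (hD : IsInducedDerivation N D)
    (hN : N ∘ₗ N = 0) {n : ℕ} (hn : finrank K (LinearMap.range N) < n) : D ^ n = 0 := by
  refine linearMap_ext <| AlternatingMap.ext fun v => ?_
  simp only [LinearMap.compAlternatingMap_apply, LinearMap.zero_apply]
  rw [hD.pow_apply_ιMulti hN,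
    sum_eq_zero fun S hS => (ιMulti K k).map_linearDependent _ fun hli => ?_, smul_zero]
  have hliS := hli.comp ((↑) : S → Fin k) Subtype.val_injective
  have hrange : Set.range (S.piecewise (N ∘ v) v ∘ ((↑) : S → Fin k)) ⊆ LinearMap.range N := by
    rintro _ ⟨j, rfl⟩
    simp
  have hcard := (finrank_span_eq_card hliS).symm.trans_le
    (Submodule.finrank_mono (Submodule.span_le.mpr hrange))
  rw [Fintype.card_coe, (mem_powersetCard.mp hS).2] at hcard
  omega

theorem pow_card_ne_zero [CharZero K] (hD : IsInducedDerivation N D) (hN : N ∘ₗ N = 0)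
    {w : Fin k → V} (hw : LinearIndependent K w) (hker : ∀ j, N (w j) = 0)
    {S : Finset (Fin k)} (hS : ∀ j ∈ S, w j ∈ LinearMap.range N) : D ^ S.card ≠ 0 := by
  have hlift : ∀ j, ∃ x, j ∈ S → N x = w j := fun j => by
    by_cases hj : j ∈ S
    · exact (hS j hj).imp fun x hx _ => hx
    · exact ⟨0, fun h => absurd h hj⟩
  choose e he using hlift
  have hv : S.piecewise (N ∘ S.piecewise e w) (S.piecewise e w) = w := by
    ext j
    by_cases hj : j ∈ S <;> simp [hj, he]
  intro h0
  have hpow := hD.pow_apply_ιMulti_of_card_eq hN (S := S) rfl (v := S.piecewise e w)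
    fun j hj => by simpa [piecewise_eq_of_notMem _ _ _ hj] using hker j
  rw [h0, hv, LinearMap.zero_apply, eq_comm, ← Nat.cast_smul_eq_nsmul K, smul_eq_zero,
    Nat.cast_eq_zero] at hpow
  exact hpow.elim (Nat.factorial_ne_zero _) (ιMulti_ne_zero_of_linearIndependent hw)

end exteriorPower.IsInducedDerivation

end Field

theorem stmt9_general {F V : Type*} [Field F] [CharZero F]
    [AddCommGroup V] [Module F V] [FiniteDimensional F V]
    (N : Module.End F V) (hN2 : N ∘ₗ N = 0)
    (s : ℕ) (hs : Module.finrank F (LinearMap.range N) = s)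
    (k : ℕ) (hk2 : k ≤ Module.finrank F V - s)
    (D : Module.End F (⋀[F]^k V))
    (hD : ∀ v : Fin k → V,
      (D ⟨ExteriorAlgebra.ιMulti F k v,
          ExteriorAlgebra.ιMulti_range F k (Set.mem_range_self v)⟩ :
        ExteriorAlgebra F V) =
      ∑ j : Fin k, ExteriorAlgebra.ιMulti F k (Function.update v j (N (v j)))) :
    IsNilpotent D ∧ nuIdx D = min k s := by
  have hD' : IsInducedDerivation N D := fun v => Subtype.ext <| (hD v).trans (by simp)
  have hker : k ≤ finrank F (LinearMap.ker N) := by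
    have := LinearMap.finrank_range_add_finrank_ker N
    omega
  have hup : D ^ (min k s + 1) = 0 := by
    rcases min_choice k s with h | h <;> rw [h]
    · exact hD'.pow_eq_zero_of_lt hN2 k.lt_succ_self
    · exact hD'.pow_eq_zero_of_finrank_range_lt hN2 (by omega)
  obtain ⟨w, S, hw, hwker, hcard, hS⟩ := exists_linearIndependent_ker_range_of_le hN2
    (hs ▸ min_le_right k s) (min_le_left k s) hker
  exact ⟨⟨_, hup⟩,
    nuIdx_eq_of_pow_succ_eq_zero hup (hcard ▸ hD'.pow_card_ne_zero hN2 hw hwker hS)⟩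

/-- let `N` be a square-zero endomorphism of rank `s ≥ 1` of a
finite-dimensional vector space `V` over a field of characteristic zero, and let
`1 ≤ k ≤ dim V − s`.  Then the derivation `D` induced by `N` on the `k`-th exterior power
`⋀^k V`, determined by `D (v₁ ∧ ⋯ ∧ v_k) = Σ_j v₁ ∧ ⋯ ∧ N v_j ∧ ⋯ ∧ v_k`, is nilpotent of
nilpotency index `min k s`. -/
theorem stmt9 {F V : Type*} [Field F] [CharZero F]
    [AddCommGroup V] [Module F V] [FiniteDimensional F V]
    (N : Module.End F V) (hN2 : N ∘ₗ N = 0)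
    (s : ℕ) (hs : Module.finrank F (LinearMap.range N) = s) (hs1 : 1 ≤ s)
    (k : ℕ) (hk1 : 1 ≤ k) (hk2 : k ≤ Module.finrank F V - s)
    (D : Module.End F (⋀[F]^k V))
    (hD : ∀ v : Fin k → V,
      (D ⟨ExteriorAlgebra.ιMulti F k v,
          ExteriorAlgebra.ιMulti_range F k (Set.mem_range_self v)⟩ :
        ExteriorAlgebra F V) =
      ∑ j : Fin k, ExteriorAlgebra.ιMulti F k (Function.update v j (N (v j)))) :
    IsNilpotent D ∧ nuIdx D = min k s :=
  stmt9_general N hN2 s hs k hk2 D hD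
end
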